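/- arXiv:1811.04802 — 2 statements merged into one kernel-verified Lean document; each statement's English description precedes it below -/
import Mathlib

section
/- For κ > 0 and y, z ∈ ℝ³, the convolution of the Yukawa Green function with itself satisfies ∫_{ℝ³} G^κ(y−x) G^κ(x−z) dx = (1/(8πκ)) e^{−κ|y−z|}. -/
open MeasureTheory Real

noncomputable def yukawaG (κ : ℝ) (x : EuclideanSpace ℝ (Fin 3)) : ℝ :=
  Real.exp (-κ * ‖x‖) / (4 * Real.pi * ‖x‖)

open Set Filter
open scoped ENNReal

/-!
Use bipolar coordinates `s = ‖a - x‖`, `t = ‖x‖` about the poles `0` and `a = y - z`: for every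
measurable `h`, `∫ h(s + t) / (s t) dx = 2π ∫_{‖a‖}^∞ h(u) du`. To see this, rotate `a` onto the
first axis, use polar coordinates `(ρ, θ)` in the orthogonal plane and substitute `u = s + t` for
`ρ`, which turns `ρ dρ / (s t)` into `du / u`; for fixed `u` the admissible first coordinates form
an interval of length `u`, which cancels the `1 / u`. Since
`G^κ(a - x) G^κ(x) = e^{-κ(s + t)} / (16 π² s t)`, taking `h(u) = e^{-κ u}` gives
`(2π / 16π²) e^{-κ‖a‖} / κ`.
-/

lemma lintegral_exp_neg_mul_Ioi {κ : ℝ} (hκ : 0 < κ) (r : ℝ) :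
    ∫⁻ u in Ioi r, ENNReal.ofReal (exp (-κ * u)) = ENNReal.ofReal (exp (-κ * r) / κ) := by
  rw [← ofReal_integral_eq_lintegral_ofReal (exp_neg_integrableOn_Ioi r hκ)
    (ae_of_all _ fun _ => (exp_pos _).le), integral_exp_mul_Ioi (neg_neg_of_pos hκ),
    neg_div_neg_eq]

lemma setOf_abs_sub_add_abs_lt_of_lt {r u : ℝ} (hr : 0 ≤ r) (hru : r < u) :
    {t : ℝ | |r - t| + |t| < u} = Ioo ((r - u) / 2) ((r + u) / 2) := by
  ext t
  simp only [mem_ofPred_eq, mem_Ioo]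
  constructor
  · intro ht
    constructor <;> cases abs_cases (r - t) <;> cases abs_cases t <;> linarith
  · rintro ⟨h₁, h₂⟩
    cases abs_cases (r - t) <;> cases abs_cases t <;> linarith

lemma setOf_abs_sub_add_abs_lt_of_le {r u : ℝ} (hur : u ≤ r) :
    {t : ℝ | |r - t| + |t| < u} = ∅ :=
  eq_empty_of_forall_notMem fun t ht =>
    (hur.trans ((le_abs_self r).trans (by simpa using abs_sub_le r t 0))).not_gt ht

lemma volume_setOf_abs_sub_add_abs_lt {r : ℝ} (hr : 0 ≤ r) (u : ℝ) :
    volume {t : ℝ | |r - t| + |t| < u} = (Ioi r).indicator ENNReal.ofReal u := by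
  by_cases hru : u ∈ Ioi r
  · rw [setOf_abs_sub_add_abs_lt_of_lt hr hru, Real.volume_Ioo, indicator_of_mem hru]
    ring_nf
  · rw [setOf_abs_sub_add_abs_lt_of_le (not_lt.mp hru), indicator_of_notMem hru, measure_empty]

lemma lintegral_lintegral_Ioi_abs_sub_add_abs {r : ℝ} (hr : 0 ≤ r) {h : ℝ → ℝ≥0∞}
    (hh : Measurable h) :
    ∫⁻ t, ∫⁻ u in Ioi (|r - t| + |t|), ENNReal.ofReal u⁻¹ * h u = ∫⁻ u in Ioi r, h u := by
  set S := {p : ℝ × ℝ | |r - p.1| + |p.1| < p.2}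
  have hS : MeasurableSet S := measurableSet_lt (by fun_prop) measurable_snd
  calc ∫⁻ t, ∫⁻ u in Ioi (|r - t| + |t|), ENNReal.ofReal u⁻¹ * h u
      = ∫⁻ t, ∫⁻ u, S.indicator (fun p => ENNReal.ofReal p.2⁻¹ * h p.2) (t, u) := by
        refine lintegral_congr fun t => ?_
        rw [← lintegral_indicator measurableSet_Ioi]
        rfl
    _ = ∫⁻ u, ∫⁻ t, {t | |r - t| + |t| < u}.indicator (fun _ => ENNReal.ofReal u⁻¹ * h u) t :=
        lintegral_lintegral_swap (((by fun_prop : Measurable fun p : ℝ × ℝ =>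
          ENNReal.ofReal p.2⁻¹ * h p.2)).indicator hS).aemeasurable
    _ = ∫⁻ u, (Ioi r).indicator h u := by
        refine lintegral_congr fun u => ?_
        rw [lintegral_indicator_const (measurableSet_lt (by fun_prop) measurable_const),
          volume_setOf_abs_sub_add_abs_lt hr]
        by_cases hu : u ∈ Ioi r
        · have hu₀ : 0 < u := hr.trans_lt hu
          rw [indicator_of_mem hu, indicator_of_mem hu, mul_right_comm,
            ← ENNReal.ofReal_mul (inv_nonneg.mpr hu₀.le), inv_mul_cancel₀ hu₀.ne',
            ENNReal.ofReal_one, one_mul]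
        · rw [indicator_of_notMem hu, indicator_of_notMem hu, mul_zero]
    _ = ∫⁻ u in Ioi r, h u := lintegral_indicator measurableSet_Ioi h

lemma strictMonoOn_sqrt_sq_add_sq (c : ℝ) :
    StrictMonoOn (fun ρ : ℝ => √(c ^ 2 + ρ ^ 2)) (Ici 0) :=
  fun _ hx _ _ hxy => Real.sqrt_lt_sqrt (by positivity) (by gcongr)

lemma tendsto_sqrt_sq_add_sq_atTop (c : ℝ) :
    Tendsto (fun ρ : ℝ => √(c ^ 2 + ρ ^ 2)) atTop atTop :=
  tendsto_atTop_mono (fun ρ => (le_abs_self ρ).trans (Real.abs_le_sqrt (by nlinarith)))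
    tendsto_id

lemma hasDerivAt_sqrt_sq_add_sq (c : ℝ) {ρ : ℝ} (hρ : 0 < ρ) :
    HasDerivAt (fun ρ : ℝ => √(c ^ 2 + ρ ^ 2)) (ρ / √(c ^ 2 + ρ ^ 2)) ρ := by
  convert ((hasDerivAt_pow 2 ρ).const_add (c ^ 2)).sqrt (by positivity) using 1
  field_simp
  ring

lemma lintegral_Ioi_sqrt_add_sqrt (c d : ℝ) (h : ℝ → ℝ≥0∞) :
    ∫⁻ ρ in Ioi 0, ENNReal.ofReal ρ *
        (ENNReal.ofReal (√(c ^ 2 + ρ ^ 2) * √(d ^ 2 + ρ ^ 2))⁻¹ *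
          h (√(c ^ 2 + ρ ^ 2) + √(d ^ 2 + ρ ^ 2))) =
      ∫⁻ u in Ioi (|c| + |d|), ENNReal.ofReal u⁻¹ * h u := by
  set f := fun ρ : ℝ => √(c ^ 2 + ρ ^ 2) + √(d ^ 2 + ρ ^ 2)
  have hmono : StrictMonoOn f (Ici 0) :=
    (strictMonoOn_sqrt_sq_add_sq c).add (strictMonoOn_sqrt_sq_add_sq d)
  have himage : f '' Ioi 0 = Ioi (|c| + |d|) := by
    rw [ContinuousOn.image_Ioi_of_strictMonoOn (by fun_prop) hmono
      ((tendsto_sqrt_sq_add_sq_atTop c).atTop_add_atTop (tendsto_sqrt_sq_add_sq_atTop d))]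
    simp [f, Real.sqrt_sq_eq_abs]
  have hderiv : ∀ ρ ∈ Ioi (0 : ℝ), HasDerivWithinAt f
      (ρ / √(c ^ 2 + ρ ^ 2) + ρ / √(d ^ 2 + ρ ^ 2)) (Ioi 0) ρ := fun ρ hρ =>
    ((hasDerivAt_sqrt_sq_add_sq c hρ).add (hasDerivAt_sqrt_sq_add_sq d hρ)).hasDerivWithinAt
  rw [← himage, lintegral_image_eq_lintegral_abs_deriv_mul measurableSet_Ioi hderiv
    (hmono.injOn.mono Ioi_subset_Ici_self)]
  refine setLIntegral_congr_fun measurableSet_Ioi fun ρ (hρ : 0 < ρ) => ?_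
  -- `du/u = ρ dρ / (√(c²+ρ²) √(d²+ρ²))` for `u = √(c²+ρ²) + √(d²+ρ²)`
  rw [← mul_assoc, ← mul_assoc, ← ENNReal.ofReal_mul hρ.le, ← ENNReal.ofReal_mul (abs_nonneg _)]
  congr 2
  rw [abs_of_pos (by positivity)]
  simp only [f]
  field_simp
  ring

lemma lintegral_comp_sq_add_sq {F : ℝ → ℝ≥0∞} (hF : Measurable F) :
    ∫⁻ v : ℝ × ℝ, F (v.1 ^ 2 + v.2 ^ 2) =
      ENNReal.ofReal (2 * π) * ∫⁻ ρ in Ioi 0, ENNReal.ofReal ρ * F (ρ ^ 2) := by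
  have hsq : ∀ p : ℝ × ℝ, (polarCoord.symm p).1 ^ 2 + (polarCoord.symm p).2 ^ 2 = p.1 ^ 2 :=
    fun p => by
      simp only [polarCoord_symm_apply]
      linear_combination p.1 ^ 2 * cos_sq_add_sin_sq p.2
  rw [← lintegral_comp_polarCoord_symm]
  simp_rw [hsq, smul_eq_mul]
  rw [polarCoord_target, Measure.volume_eq_prod, ← Measure.prod_restrict, lintegral_prod _
    (by fun_prop : Measurable fun p : ℝ × ℝ => ENNReal.ofReal p.1 * F (p.1 ^ 2)).aemeasurable]
  simp_rw [setLIntegral_const, Real.volume_Ioo, sub_neg_eq_add, ← two_mul]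
  rw [lintegral_mul_const' _ _ ENNReal.ofReal_ne_top, mul_comm]

def prodEquivEuclideanFinThree : ℝ × ℝ × ℝ ≃ᵐ EuclideanSpace ℝ (Fin 3) :=
  ((MeasurableEquiv.refl ℝ).prodCongr MeasurableEquiv.finTwoArrow.symm).trans
    ((MeasurableEquiv.piFinSuccAbove (fun _ : Fin 3 => ℝ) 0).symm.trans
      (MeasurableEquiv.toLp 2 (Fin 3 → ℝ)))

lemma measurePreserving_prodEquivEuclideanFinThree :
    MeasurePreserving prodEquivEuclideanFinThree :=
  ((MeasurePreserving.id volume).prod (volume_preserving_finTwoArrow ℝ).symm).trans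
    ((volume_preserving_piFinSuccAbove (fun _ : Fin 3 => ℝ) 0).symm.trans
      (EuclideanSpace.volume_preserving_symm_measurableEquiv_toLp (Fin 3)).symm)

lemma prodEquivEuclideanFinThree_apply (p : ℝ × ℝ × ℝ) :
    prodEquivEuclideanFinThree p = !₂[p.1, p.2.1, p.2.2] := by
  ext i; fin_cases i <;> rfl

lemma norm_prodEquivEuclideanFinThree (p : ℝ × ℝ × ℝ) :
    ‖prodEquivEuclideanFinThree p‖ = √(p.1 ^ 2 + (p.2.1 ^ 2 + p.2.2 ^ 2)) := by
  simp [prodEquivEuclideanFinThree_apply, EuclideanSpace.norm_eq, Fin.sum_univ_three, add_assoc]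

lemma norm_sub_prodEquivEuclideanFinThree (q p : ℝ × ℝ × ℝ) :
    ‖prodEquivEuclideanFinThree q - prodEquivEuclideanFinThree p‖ =
      √((q.1 - p.1) ^ 2 + ((q.2.1 - p.2.1) ^ 2 + (q.2.2 - p.2.2) ^ 2)) := by
  simp [prodEquivEuclideanFinThree_apply, EuclideanSpace.norm_eq, Fin.sum_univ_three, add_assoc]

lemma lintegral_bipolar_axis {r : ℝ} (hr : 0 ≤ r) {h : ℝ → ℝ≥0∞} (hh : Measurable h) :
    ∫⁻ x, ENNReal.ofReal (‖prodEquivEuclideanFinThree (r, 0, 0) - x‖ * ‖x‖)⁻¹ *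
        h (‖prodEquivEuclideanFinThree (r, 0, 0) - x‖ + ‖x‖) =
      ENNReal.ofReal (2 * π) * ∫⁻ u in Ioi r, h u := by
  set a := prodEquivEuclideanFinThree (r, 0, 0)
  set F : ℝ → ℝ → ℝ≥0∞ := fun t q =>
    ENNReal.ofReal (√((r - t) ^ 2 + q) * √(t ^ 2 + q))⁻¹ * h (√((r - t) ^ 2 + q) + √(t ^ 2 + q))
  have hF : Measurable (Function.uncurry F) := by fun_prop
  calc ∫⁻ x, ENNReal.ofReal (‖a - x‖ * ‖x‖)⁻¹ * h (‖a - x‖ + ‖x‖)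
      = ∫⁻ p : ℝ × ℝ × ℝ, F p.1 (p.2.1 ^ 2 + p.2.2 ^ 2) := by
        rw [← measurePreserving_prodEquivEuclideanFinThree.lintegral_comp_emb
          prodEquivEuclideanFinThree.measurableEmbedding]
        simp [a, F, norm_sub_prodEquivEuclideanFinThree, norm_prodEquivEuclideanFinThree]
    _ = ∫⁻ t, ∫⁻ v : ℝ × ℝ, F t (v.1 ^ 2 + v.2 ^ 2) := by
        rw [Measure.volume_eq_prod, lintegral_prod _ (by fun_prop)]
    _ = ∫⁻ t, ENNReal.ofReal (2 * π) *
          ∫⁻ u in Ioi (|r - t| + |t|), ENNReal.ofReal u⁻¹ * h u := by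
        refine lintegral_congr fun t => ?_
        rw [lintegral_comp_sq_add_sq hF.of_uncurry_left]
        exact congrArg _ (lintegral_Ioi_sqrt_add_sqrt (r - t) t h)
    _ = ENNReal.ofReal (2 * π) * ∫⁻ u in Ioi r, h u := by
        rw [lintegral_const_mul' _ _ ENNReal.ofReal_ne_top,
          lintegral_lintegral_Ioi_abs_sub_add_abs hr hh]

lemma lintegral_comp_norm_sub_norm_of_norm_eq {E : Type*} [NormedAddCommGroup E]
    [InnerProductSpace ℝ E] [FiniteDimensional ℝ E] [MeasurableSpace E] [BorelSpace E]
    (F : ℝ → ℝ → ℝ≥0∞) {v w : E} (hvw : ‖v‖ = ‖w‖) :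
    ∫⁻ x, F ‖v - x‖ ‖x‖ = ∫⁻ x, F ‖w - x‖ ‖x‖ := by
  set T := (ℝ ∙ (w - v))ᗮ.reflection
  have hTw : T w = v := Submodule.reflection_sub hvw.symm
  rw [← T.measurePreserving.lintegral_comp_emb T.toMeasurableEquiv.measurableEmbedding]
  refine lintegral_congr fun x => ?_
  rw [← hTw, ← map_sub, T.norm_map, T.norm_map]

theorem lintegral_bipolar (a : EuclideanSpace ℝ (Fin 3)) {h : ℝ → ℝ≥0∞} (hh : Measurable h) :
    ∫⁻ x, ENNReal.ofReal (‖a - x‖ * ‖x‖)⁻¹ * h (‖a - x‖ + ‖x‖) =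
      ENNReal.ofReal (2 * π) * ∫⁻ u in Ioi ‖a‖, h u := by
  have ha : ‖a‖ = ‖prodEquivEuclideanFinThree (‖a‖, 0, 0)‖ := by
    simp [norm_prodEquivEuclideanFinThree]
  rw [lintegral_comp_norm_sub_norm_of_norm_eq
    (fun s t => ENNReal.ofReal (s * t)⁻¹ * h (s + t)) ha]
  exact lintegral_bipolar_axis (norm_nonneg a) hh

@[fun_prop]
lemma measurable_yukawaG (κ : ℝ) : Measurable (yukawaG κ) := by
  unfold yukawaG; fun_prop

lemma yukawaG_nonneg (κ : ℝ) (x : EuclideanSpace ℝ (Fin 3)) : 0 ≤ yukawaG κ x := by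
  unfold yukawaG; positivity

lemma yukawaG_mul_yukawaG (κ : ℝ) (u v : EuclideanSpace ℝ (Fin 3)) :
    yukawaG κ u * yukawaG κ v =
      (16 * π ^ 2)⁻¹ * ((‖u‖ * ‖v‖)⁻¹ * exp (-κ * (‖u‖ + ‖v‖))) := by
  rw [yukawaG, yukawaG, mul_add, exp_add]
  field_simp
  ring

lemma lintegral_yukawaG_sub_mul_yukawaG {κ : ℝ} (hκ : 0 < κ) (w : EuclideanSpace ℝ (Fin 3)) :
    ∫⁻ x, ENNReal.ofReal (yukawaG κ (w - x) * yukawaG κ x) =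
      ENNReal.ofReal (exp (-κ * ‖w‖) / (8 * π * κ)) := by
  simp_rw [yukawaG_mul_yukawaG, ENNReal.ofReal_mul (by positivity : (0 : ℝ) ≤ (16 * π ^ 2)⁻¹),
    ENNReal.ofReal_mul (inv_nonneg.mpr (mul_nonneg (norm_nonneg _) (norm_nonneg _)))]
  rw [lintegral_const_mul' _ _ ENNReal.ofReal_ne_top,
    lintegral_bipolar w (by fun_prop : Measurable fun u => ENNReal.ofReal (exp (-κ * u))),
    lintegral_exp_neg_mul_Ioi hκ, ← ENNReal.ofReal_mul (by positivity),
    ← ENNReal.ofReal_mul (by positivity)]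
  congr 1
  field_simp
  ring

theorem yukawa_convolution (κ : ℝ) (hκ : 0 < κ) (y z : EuclideanSpace ℝ (Fin 3)) :
    ∫ x : EuclideanSpace ℝ (Fin 3), yukawaG κ (y - x) * yukawaG κ (x - z) =
      (1 / (8 * Real.pi * κ)) * Real.exp (-κ * ‖y - z‖) := by
  have htranslate : ∫ x, yukawaG κ (y - x) * yukawaG κ (x - z) =
      ∫ x, yukawaG κ (y - z - x) * yukawaG κ x := by
    rw [← integral_add_right_eq_self _ z]
    simp_rw [add_sub_cancel_right, sub_add_eq_sub_sub_swap]
  have hnonneg : 0 ≤ fun x => yukawaG κ (y - z - x) * yukawaG κ x := fun x =>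
    mul_nonneg (yukawaG_nonneg κ _) (yukawaG_nonneg κ x)
  rw [htranslate, integral_eq_lintegral_of_nonneg_ae (ae_of_all _ hnonneg)
    (by fun_prop : Measurable _).aestronglyMeasurable,
    lintegral_yukawaG_sub_mul_yukawaG hκ, ENNReal.toReal_ofReal (by positivity)]
  ring
end

section
/- For κ > 0 and r > 0, the integral ∫_{ℝ³} e^{i p·y} / (|p|² + κ²)² dp equals (π²/κ) e^{−κ|y|} for every y ∈ ℝ³ with y ≠ 0. -/
/-!
Schwinger's parametrisation `c⁻² = ∫₀^∞ t e^{-ct} dt` writes the integrand as a `t`-integral of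
Gaussians in `p`, whose Fourier transforms are explicit. In dimension below 4 the absolute
integrand is integrable in `(t, p)`, so Fubini leaves
`π^{3/2} ∫₀^∞ t^{-1/2} e^{-κ²t - ‖y‖²/(4t)} dt`. The substitution `t = s²` turns this into
`∫₀^∞ e^{-(a s² + b/s²)} ds = √π/(2√a) e^{-2√(ab)}`, which follows from `√π = ∫_ℝ e^{-u²} du`
with `u = √a s - √b/s`, together with the symmetry `s ↦ √(b/a)/s` of `(0, ∞)`, which reverses
the sign of `u`.
-/

open MeasureTheory Real Complex Set Module

theorem integral_div_sq_smul_comp_div_Ioi {E : Type*} [NormedAddCommGroup E] [NormedSpace ℝ E]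
    {c : ℝ} (hc : 0 < c) (g : ℝ → E) :
    ∫ s in Ioi 0, (c / s ^ 2) • g (c / s) = ∫ s in Ioi 0, g s := by
  have himage : (fun s : ℝ => c / s) '' Ioi 0 = Ioi 0 := by
    ext v
    refine ⟨fun ⟨s, hs, hv⟩ => hv ▸ div_pos hc hs, fun hv => ⟨c / v, div_pos hc hv, ?_⟩⟩
    exact div_div_cancel₀ hc.ne'
  have hderiv : ∀ s ∈ Ioi (0 : ℝ),
      HasDerivWithinAt (fun s => c / s) (-(c / s ^ 2)) (Ioi 0) s := fun s hs => by
    simpa [div_eq_mul_inv] using ((hasDerivAt_inv (ne_of_gt hs)).const_mul c).hasDerivWithinAt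
  have hinj : InjOn (fun s : ℝ => c / s) (Ioi 0) := fun s _ t _ h =>
    inv_injective (mul_left_cancel₀ hc.ne' (by simpa [div_eq_mul_inv] using h))
  have := integral_image_eq_integral_abs_deriv_smul measurableSet_Ioi hderiv hinj g
  rw [himage] at this
  rw [this]
  refine setIntegral_congr_fun measurableSet_Ioi fun s hs => ?_
  rw [abs_neg, abs_of_pos (div_pos hc (pow_pos hs 2))]

theorem hasDerivAt_mul_sub_div (α β : ℝ) {s : ℝ} (hs : s ≠ 0) :
    HasDerivAt (fun s => α * s - β / s) (α + β / s ^ 2) s := by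
  have := ((hasDerivAt_id s).const_mul α).fun_sub ((hasDerivAt_inv hs).const_mul β)
  simpa [div_eq_mul_inv] using this

theorem strictMonoOn_mul_sub_div {α β : ℝ} (hα : 0 < α) (hβ : 0 ≤ β) :
    StrictMonoOn (fun s => α * s - β / s) (Ioi 0) := fun s hs t _ hst => by
  have : β / t ≤ β / s := div_le_div_of_nonneg_left hβ hs hst.le
  have : α * s < α * t := mul_lt_mul_of_pos_left hst hα
  dsimp only
  linarith

theorem image_mul_sub_div_Ioi {α β : ℝ} (hα : 0 < α) (hβ : 0 < β) :
    (fun s => α * s - β / s) '' Ioi 0 = univ := by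
  refine eq_univ_of_forall fun v => ?_
  -- the positive root of `α s² - v s - β = 0`
  set w := √(v ^ 2 + 4 * α * β)
  have hw : w ^ 2 = v ^ 2 + 4 * α * β := sq_sqrt (by positivity)
  have hvw : 0 < v + w := by
    have : |v| < w := by
      rw [← sqrt_sq_eq_abs]
      exact sqrt_lt_sqrt (sq_nonneg v) (by nlinarith)
    linarith [neg_abs_le v]
  refine ⟨(v + w) / (2 * α), div_pos hvw (by positivity), ?_⟩
  field_simp
  linear_combination hw

theorem integral_add_div_sq_smul_comp_mul_sub_div_Ioi {E : Type*} [NormedAddCommGroup E]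
    [NormedSpace ℝ E] {α β : ℝ} (hα : 0 < α) (hβ : 0 < β) (g : ℝ → E) :
    ∫ s in Ioi 0, (α + β / s ^ 2) • g (α * s - β / s) = ∫ u, g u := by
  have := integral_image_eq_integral_abs_deriv_smul measurableSet_Ioi
    (fun s hs => (hasDerivAt_mul_sub_div α β (ne_of_gt hs)).hasDerivWithinAt)
    (strictMonoOn_mul_sub_div hα hβ.le).injOn g
  rw [image_mul_sub_div_Ioi hα hβ, setIntegral_univ] at this
  rw [this]
  refine setIntegral_congr_fun measurableSet_Ioi fun s hs => ?_
  rw [abs_of_pos (by have : 0 < s := hs; positivity)]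

theorem integrable_iff_integrableOn_add_div_sq_smul_comp_mul_sub_div {E : Type*}
    [NormedAddCommGroup E] [NormedSpace ℝ E] {α β : ℝ} (hα : 0 < α) (hβ : 0 < β) (g : ℝ → E) :
    Integrable g ↔ IntegrableOn (fun s => (α + β / s ^ 2) • g (α * s - β / s)) (Ioi 0) := by
  have := integrableOn_image_iff_integrableOn_abs_deriv_smul measurableSet_Ioi
    (fun s hs => (hasDerivAt_mul_sub_div α β (ne_of_gt hs)).hasDerivWithinAt)
    (strictMonoOn_mul_sub_div hα hβ.le).injOn g
  rw [image_mul_sub_div_Ioi hα hβ, integrableOn_univ] at this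
  rw [this]
  refine integrableOn_congr_fun (fun s hs => ?_) measurableSet_Ioi
  rw [abs_of_pos (by have : 0 < s := hs; positivity)]

theorem integral_exp_neg_sq_mul_sub_div_Ioi {α β : ℝ} (hα : 0 < α) (hβ : 0 < β) :
    ∫ s in Ioi 0, rexp (-(α * s - β / s) ^ 2) = √π / (2 * α) := by
  set G : ℝ → ℝ := fun s => rexp (-(α * s - β / s) ^ 2)
  have hgauss : Integrable fun u : ℝ => rexp (-u ^ 2) := by
    simpa using integrable_exp_neg_mul_sq one_pos
  have hsum_int : IntegrableOn (fun s => (α + β / s ^ 2) * G s) (Ioi 0) :=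
    (integrable_iff_integrableOn_add_div_sq_smul_comp_mul_sub_div hα hβ _).1 hgauss
  have hsum : ∫ s in Ioi 0, (α + β / s ^ 2) * G s = √π := by
    refine (integral_add_div_sq_smul_comp_mul_sub_div_Ioi hα hβ fun u => rexp (-u ^ 2)).trans ?_
    simpa using integral_gaussian 1
  -- `s ↦ (β / α) / s` preserves `(0, ∞)` and changes the sign of `α s - β / s`
  have hreflect : ∫ s in Ioi 0, β / s ^ 2 * G s = α * ∫ s in Ioi 0, G s := by
    rw [← integral_div_sq_smul_comp_div_Ioi (div_pos hβ hα), ← integral_const_mul]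
    refine setIntegral_congr_fun measurableSet_Ioi fun s hs => ?_
    have hs : s ≠ 0 := ne_of_gt hs
    have : α * (β / α / s) - β / (β / α / s) = -(α * s - β / s) := by
      field_simp
      ring
    simp only [smul_eq_mul, G, this, neg_sq]
    field_simp
  have hG_meas : Measurable G := by
    simp only [G]
    fun_prop
  have hG_nonneg : ∀ s, 0 ≤ G s := fun s => (exp_pos _).le
  have hconst_int : IntegrableOn (fun s => α * G s) (Ioi 0) := by
    refine hsum_int.mono' (hG_meas.const_mul α).aestronglyMeasurable
      (ae_restrict_of_forall_mem measurableSet_Ioi fun s hs => ?_)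
    rw [norm_of_nonneg (mul_nonneg hα.le (hG_nonneg s))]
    exact mul_le_mul_of_nonneg_right (le_add_of_nonneg_right (by positivity)) (hG_nonneg s)
  have hdiv_int : IntegrableOn (fun s => β / s ^ 2 * G s) (Ioi 0) := by
    have hmeas : Measurable fun s : ℝ => β / s ^ 2 := by fun_prop
    refine hsum_int.mono' (hmeas.mul hG_meas).aestronglyMeasurable
      (ae_restrict_of_forall_mem measurableSet_Ioi fun s hs => ?_)
    rw [norm_of_nonneg (mul_nonneg (by positivity) (hG_nonneg s))]
    exact mul_le_mul_of_nonneg_right (le_add_of_nonneg_left hα.le) (hG_nonneg s)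
  have hsplit : √π = α * (∫ s in Ioi 0, G s) + ∫ s in Ioi 0, β / s ^ 2 * G s := by
    rw [← hsum, ← integral_const_mul, ← integral_add hconst_int hdiv_int]
    exact setIntegral_congr_fun measurableSet_Ioi fun s _ => by ring
  rw [hreflect] at hsplit
  rw [hsplit]
  field_simp
  ring

theorem integral_exp_neg_mul_sq_add_div_sq_Ioi {a b : ℝ} (ha : 0 < a) (hb : 0 ≤ b) :
    ∫ s in Ioi 0, rexp (-(a * s ^ 2 + b / s ^ 2)) = √π / (2 * √a) * rexp (-(2 * √(a * b))) := by
  rcases hb.eq_or_lt with rfl | hb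
  · simp_rw [zero_div, add_zero, ← neg_mul]
    rw [integral_gaussian_Ioi, sqrt_div' π ha.le]
    simp [div_div, mul_comm]
  have hsq : ∀ s ∈ Ioi (0 : ℝ), rexp (-(a * s ^ 2 + b / s ^ 2)) =
      rexp (-(2 * √(a * b))) * rexp (-(√a * s - √b / s) ^ 2) := fun s hs => by
    have hs : s ≠ 0 := ne_of_gt hs
    rw [← Real.exp_add, sqrt_mul ha.le]
    congr 1
    field_simp
    linear_combination (s ^ 4) * sq_sqrt ha.le + sq_sqrt hb.le
  rw [setIntegral_congr_fun measurableSet_Ioi hsq, integral_const_mul,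
    integral_exp_neg_sq_mul_sub_div_Ioi (sqrt_pos.2 ha) (sqrt_pos.2 hb)]
  ring

theorem integral_rpow_neg_half_mul_exp_neg_mul_add_div_Ioi {a b : ℝ} (ha : 0 < a) (hb : 0 ≤ b) :
    ∫ t in Ioi 0, t ^ (-(1 / 2) : ℝ) * rexp (-(a * t + b / t)) =
      √π / √a * rexp (-(2 * √(a * b))) := by
  rw [← integral_comp_rpow_Ioi_of_pos two_pos]
  have hsubst : ∀ s ∈ Ioi (0 : ℝ), (2 * s ^ ((2 : ℝ) - 1)) • ((s ^ (2 : ℝ)) ^ (-(1 / 2) : ℝ) *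
      rexp (-(a * s ^ (2 : ℝ) + b / s ^ (2 : ℝ)))) = 2 * rexp (-(a * s ^ 2 + b / s ^ 2)) :=
    fun s hs => by
    have hs : 0 < s := hs
    rw [← rpow_mul hs.le, rpow_two]
    norm_num [rpow_neg_one]
    field_simp
  rw [setIntegral_congr_fun measurableSet_Ioi hsubst, integral_const_mul,
    integral_exp_neg_mul_sq_add_div_sq_Ioi ha hb]
  field_simp

theorem integral_mul_exp_neg_mul_Ioi {c : ℝ} (hc : 0 < c) :
    ∫ t in Ioi 0, t * rexp (-(c * t)) = (c ^ 2)⁻¹ := by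
  simpa [show (2 : ℝ) - 1 = 1 by norm_num] using integral_rpow_mul_exp_neg_mul_Ioi two_pos hc

theorem mul_div_rpow_eq {a t : ℝ} (ha : 0 ≤ a) (ht : 0 < t) (x : ℝ) :
    t * (a / t) ^ x = a ^ x * t ^ (1 - x) := by
  rw [div_rpow ha ht.le, rpow_sub ht, rpow_one]
  ring

section Schwinger

variable {V : Type*} [NormedAddCommGroup V] [InnerProductSpace ℝ V]

noncomputable def schwingerIntegrand (κ : ℝ) (y : V) (t : ℝ) (p : V) : ℂ :=
  (t * rexp (-(κ ^ 2 * t)) : ℝ) * cexp (-t * ‖p‖ ^ 2 + I * inner ℝ y p)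

theorem norm_schwingerIntegrand (κ : ℝ) (y : V) {t : ℝ} (ht : 0 ≤ t) (p : V) :
    ‖schwingerIntegrand κ y t p‖ = t * rexp (-(κ ^ 2 * t)) * rexp (-t * ‖p‖ ^ 2) := by
  rw [schwingerIntegrand, norm_mul, Complex.norm_real, norm_of_nonneg (by positivity),
    Complex.norm_exp]
  congr 2
  simp [← Complex.ofReal_pow]

theorem integral_schwingerIntegrand_Ioi {κ : ℝ} (hκ : κ ≠ 0) (y p : V) :
    ∫ t in Ioi 0, schwingerIntegrand κ y t p =
      cexp (I * (inner ℝ p y : ℝ)) / ((‖p‖ ^ 2 + κ ^ 2 : ℝ) : ℂ) ^ 2 := by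
  have hc : 0 < ‖p‖ ^ 2 + κ ^ 2 := by positivity
  have hsplit : ∀ t, schwingerIntegrand κ y t p =
      cexp (I * (inner ℝ p y : ℝ)) * ((t * rexp (-((‖p‖ ^ 2 + κ ^ 2) * t)) : ℝ) : ℂ) := fun t => by
    rw [schwingerIntegrand, real_inner_comm]
    push_cast
    rw [mul_assoc, ← Complex.exp_add, mul_left_comm, ← Complex.exp_add]
    ring_nf
  simp_rw [hsplit]
  rw [integral_const_mul, integral_complex_ofReal, integral_mul_exp_neg_mul_Ioi hc]
  push_cast
  ring

variable [FiniteDimensional ℝ V] [MeasurableSpace V] [BorelSpace V]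

theorem integral_schwingerIntegrand {κ t : ℝ} (y : V) (ht : 0 < t) :
    ∫ p, schwingerIntegrand κ y t p = ((π ^ (finrank ℝ V / 2 : ℝ) *
      (t ^ (1 - finrank ℝ V / 2 : ℝ) * rexp (-(κ ^ 2 * t + ‖y‖ ^ 2 / 4 / t))) : ℝ) : ℂ) := by
  have hb : 0 < (t : ℂ).re := by simpa using ht
  simp_rw [schwingerIntegrand, integral_const_mul, ← neg_mul,
    GaussianFourier.integral_cexp_neg_mul_sq_norm_add hb I y]
  rw [← Complex.ofReal_div, ← Complex.ofReal_natCast, ← Complex.ofReal_ofNat, ← Complex.ofReal_div,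
    ← Complex.ofReal_cpow (div_nonneg pi_pos.le ht.le)]
  have hexp : I ^ 2 * (‖y‖ : ℂ) ^ 2 / (4 * t) = ((-(‖y‖ ^ 2 / 4 / t) : ℝ) : ℂ) := by
    push_cast
    rw [I_sq]
    ring
  rw [hexp, ← Complex.ofReal_exp, ← Complex.ofReal_mul, ← Complex.ofReal_mul, neg_add,
    Real.exp_add, neg_mul]
  congr 1
  linear_combination (rexp (-(κ ^ 2 * t)) * rexp (-(‖y‖ ^ 2 / 4 / t))) *
    mul_div_rpow_eq pi_pos.le ht (finrank ℝ V / 2)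

theorem integral_norm_schwingerIntegrand {κ t : ℝ} (y : V) (ht : 0 < t) :
    ∫ p, ‖schwingerIntegrand κ y t p‖ =
      π ^ (finrank ℝ V / 2 : ℝ) * (t ^ (1 - finrank ℝ V / 2 : ℝ) * rexp (-(κ ^ 2 * t))) := by
  simp_rw [norm_schwingerIntegrand κ y ht.le, integral_const_mul,
    GaussianFourier.integral_rexp_neg_mul_sq_norm ht, mul_right_comm _ (rexp _),
    mul_div_rpow_eq pi_pos.le ht]
  ring

theorem integrable_schwingerIntegrand (hV : finrank ℝ V < 4) {κ : ℝ} (hκ : κ ≠ 0) (y : V) :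
    Integrable (Function.uncurry (schwingerIntegrand κ y))
      ((volume.restrict (Ioi 0)).prod volume) := by
  have hcont : Continuous (Function.uncurry (schwingerIntegrand κ y)) := by
    unfold Function.uncurry schwingerIntegrand
    fun_prop
  refine (integrable_prod_iff hcont.aestronglyMeasurable).2 ⟨?_, ?_⟩
  · filter_upwards [ae_restrict_mem measurableSet_Ioi] with t ht
    have hb : 0 < (t : ℂ).re := by simpa using ht
    simp only [Function.uncurry_apply_pair, schwingerIntegrand]
    exact (GaussianFourier.integrable_cexp_neg_mul_sq_norm_add hb I y).const_mul _
  · have hexponent : -1 < 1 - (finrank ℝ V / 2 : ℝ) := by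
      have : (finrank ℝ V : ℝ) < 4 := by exact_mod_cast hV
      linarith
    refine IntegrableOn.congr_fun ((integrableOn_rpow_mul_exp_neg_mul_rpow hexponent one_pos
      (sq_pos_of_ne_zero hκ)).const_mul (π ^ (finrank ℝ V / 2 : ℝ))) (fun t ht => ?_)
      measurableSet_Ioi
    simp only [Function.uncurry_apply_pair]
    rw [integral_norm_schwingerIntegrand y ht, rpow_one, neg_mul]

theorem integral_cexp_inner_div_sq_norm_sq_add_sq (hV : finrank ℝ V < 4) {κ : ℝ} (hκ : κ ≠ 0)
    (y : V) :
    ∫ p : V, cexp (I * (inner ℝ p y : ℝ)) / ((‖p‖ ^ 2 + κ ^ 2 : ℝ) : ℂ) ^ 2 =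
      ((π ^ (finrank ℝ V / 2 : ℝ) * ∫ t in Ioi 0,
        t ^ (1 - finrank ℝ V / 2 : ℝ) * rexp (-(κ ^ 2 * t + ‖y‖ ^ 2 / 4 / t)) : ℝ) : ℂ) := by
  calc _ = ∫ p : V, ∫ t in Ioi 0, schwingerIntegrand κ y t p := by
        simp_rw [integral_schwingerIntegrand_Ioi hκ]
    _ = ∫ t in Ioi 0, ∫ p : V, schwingerIntegrand κ y t p :=
        (integral_integral_swap (integrable_schwingerIntegrand hV hκ y)).symm
    _ = _ := by
        rw [setIntegral_congr_fun measurableSet_Ioi fun t ht => integral_schwingerIntegrand y ht,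
          integral_complex_ofReal, integral_const_mul]

end Schwinger

theorem fourier_integral_yukawa_general (κ : ℝ) (hκ : 0 < κ)
    (y : EuclideanSpace ℝ (Fin 3)) :
    ∫ p : EuclideanSpace ℝ (Fin 3),
        Complex.exp (Complex.I * (inner ℝ p y : ℝ)) / ((‖p‖ ^ 2 + κ ^ 2 : ℝ) : ℂ) ^ 2 =
      ((Real.pi ^ 2 / κ) * Real.exp (-κ * ‖y‖) : ℝ) := by
  have hdim : finrank ℝ (EuclideanSpace ℝ (Fin 3)) = 3 := finrank_euclideanSpace_fin
  have hexponent : 1 - ((3 : ℕ) / 2 : ℝ) = -(1 / 2) := by norm_num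
  have hsqrt : √(κ ^ 2 * (‖y‖ ^ 2 / 4)) = κ * ‖y‖ / 2 := by
    rw [show κ ^ 2 * (‖y‖ ^ 2 / 4) = (κ * ‖y‖ / 2) ^ 2 by ring]
    exact sqrt_sq (by positivity)
  have hpi : π ^ ((3 : ℕ) / 2 : ℝ) * √π = π ^ 2 := by
    rw [sqrt_eq_rpow, ← rpow_add pi_pos]
    norm_num
  rw [integral_cexp_inner_div_sq_norm_sq_add_sq (by omega) hκ.ne' y, hdim, hexponent,
    integral_rpow_neg_half_mul_exp_neg_mul_add_div_Ioi (by positivity) (by positivity), hsqrt,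
    sqrt_sq hκ.le, ← hpi]
  congr 1
  ring_nf

theorem fourier_integral_yukawa (κ r : ℝ) (hκ : 0 < κ) (hr : 0 < r)
    (y : EuclideanSpace ℝ (Fin 3)) (hy : y ≠ 0) :
    ∫ p : EuclideanSpace ℝ (Fin 3),
        Complex.exp (Complex.I * (inner ℝ p y : ℝ)) / ((‖p‖ ^ 2 + κ ^ 2 : ℝ) : ℂ) ^ 2 =
      ((Real.pi ^ 2 / κ) * Real.exp (-κ * ‖y‖) : ℝ) :=
  fourier_integral_yukawa_general κ hκ y
end
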